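/- arXiv:2007.12123 — 2 statements merged into one kernel-verified Lean document; each statement's English description precedes it below -/
import Mathlib

section
/- Let G be a finite directed graph with F ⊆ V, and let F* be the largest self-reachable subset of F. If F* is nonempty and v is a vertex from which some vertex of F* is reachable, then there exists an infinite walk starting at v that visits F* (hence F) infinitely often. -/
/-!
A lasso: follow a path from `v` to some `f ∈ F*`, then go around a cycle through `f` forever,
unrolled as `i ↦ p (i % (n + 1))` for a closed path `p` of length `n + 1`.
-/

/-- A subset A of F is self-reachable if every pair of its vertices are mutually reachable. -/
def SelfReach {V : Type*} (E : V → V → Prop) (F A : Set V) : Prop :=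
  A ⊆ F ∧ ∀ u ∈ A, ∀ v ∈ A, Relation.ReflTransGen E u v ∧ Relation.ReflTransGen E v u

/-- The largest self-reachable subset F* of F. -/
def FstarSet {V : Type*} (E : V → V → Prop) (F : Set V) : Set V :=
  ⋃₀ {A | SelfReach E F A}

namespace Relation

variable {α : Type*} {r : α → α → Prop} {a b : α}

theorem TransGen.exists_path (h : TransGen r a b) :
    ∃ n, ∃ p : ℕ → α, p 0 = a ∧ p (n + 1) = b ∧ ∀ i ≤ n, r (p i) (p (i + 1)) := by
  induction h with
  | single hab => exact ⟨0, fun i => if i = 0 then a else _, rfl, rfl, by simpa using hab⟩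
  | @tail b c _ hbc ih =>
    obtain ⟨n, p, hp0, hpn, hp⟩ := ih
    refine ⟨n + 1, fun i => if i ≤ n + 1 then p i else c, by simpa using hp0, by simp, ?_⟩
    intro i hi
    rcases Nat.lt_or_eq_of_le hi with hi | rfl
    · simpa [show i ≤ n + 1 by omega, show i + 1 ≤ n + 1 by omega] using hp i (by omega)
    · simpa [hpn] using hbc

theorem ReflTransGen.exists_path (h : ReflTransGen r a b) :
    ∃ n, ∃ p : ℕ → α, p 0 = a ∧ p n = b ∧ ∀ i < n, r (p i) (p (i + 1)) := by
  rcases reflTransGen_iff_eq_or_transGen.mp h with rfl | h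
  · exact ⟨0, fun _ => b, rfl, rfl, by simp⟩
  · obtain ⟨n, p, hp0, hpn, hp⟩ := h.exists_path
    exact ⟨n + 1, p, hp0, hpn, fun i hi => hp i (by omega)⟩

theorem TransGen.exists_walk_infinite_eq (h : TransGen r a a) :
    ∃ c : ℕ → α, c 0 = a ∧ (∀ i, r (c i) (c (i + 1))) ∧ {i | c i = a}.Infinite := by
  obtain ⟨n, p, hp0, hpn, hp⟩ := h.exists_path
  have hmod (i : ℕ) : i % (n + 1) ≤ n := Nat.le_of_lt_succ (Nat.mod_lt i (by omega))
  have hstep (i : ℕ) : p ((i + 1) % (n + 1)) = p (i % (n + 1) + 1) := by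
    rw [← Nat.mod_add_mod]
    rcases Nat.lt_or_eq_of_le (hmod i) with hi | hi
    · rw [Nat.mod_eq_of_lt (by omega)]
    · rw [hi, Nat.mod_self, hp0, hpn]
  refine ⟨fun i => p (i % (n + 1)), by simpa using hp0, fun i => ?_, ?_⟩
  · simpa only [hstep] using hp _ (hmod i)
  · refine Set.infinite_of_forall_exists_gt fun k => ⟨(k + 1) * (n + 1), ?_, ?_⟩
    · simpa [Nat.mul_mod_left] using hp0
    · nlinarith

theorem ReflTransGen.exists_walk_append {c : ℕ → α} (h : ReflTransGen r a (c 0))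
    (hc : ∀ i, r (c i) (c (i + 1))) :
    ∃ m, ∃ w : ℕ → α, w 0 = a ∧ (∀ i, r (w i) (w (i + 1))) ∧ ∀ i, w (m + i) = c i := by
  obtain ⟨m, p, hp0, hpm, hp⟩ := h.exists_path
  set w : ℕ → α := fun i => if i ≤ m then p i else c (i - m)
  have hshift (i : ℕ) : w (m + i) = c i := by
    rcases Nat.eq_zero_or_pos i with rfl | hi
    · simpa [w] using hpm
    · simp [w, show ¬ m + i ≤ m by omega]
  refine ⟨m, w, by simpa [w] using hp0, fun i => ?_, hshift⟩
  rcases Nat.lt_or_ge i m with hi | hi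
  · simpa [w, hi.le, show i + 1 ≤ m by omega] using hp i hi
  · obtain ⟨k, rfl⟩ := Nat.exists_eq_add_of_le hi
    simpa only [hshift, add_assoc] using hc k

theorem ReflTransGen.exists_walk_infinite_eq (h : ReflTransGen r a b) (hb : TransGen r b b) :
    ∃ w : ℕ → α, w 0 = a ∧ (∀ i, r (w i) (w (i + 1))) ∧ {i | w i = b}.Infinite := by
  obtain ⟨c, hc0, hc, hcb⟩ := hb.exists_walk_infinite_eq
  obtain ⟨m, w, hw0, hw, hwc⟩ := (hc0 ▸ h).exists_walk_append hc
  refine ⟨w, hw0, hw, (hcb.image (add_right_injective m).injOn).mono ?_⟩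
  rintro _ ⟨i, hi, rfl⟩
  simpa [hwc] using hi

end Relation

theorem fstarSet_subset {V : Type*} (E : V → V → Prop) (F : Set V) : FstarSet E F ⊆ F :=
  Set.sUnion_subset fun _ hA => hA.1

theorem exists_accepting_walk_general {V : Type*}
    (E : V → V → Prop) (F : Set V)
    (hcyc : ∀ u ∈ FstarSet E F, ∃ u', E u u' ∧ Relation.ReflTransGen E u' u)
    (v : V) (hreach : ∃ f ∈ FstarSet E F, Relation.ReflTransGen E v f) :
    ∃ walk : ℕ → V, walk 0 = v ∧ (∀ i, E (walk i) (walk (i + 1))) ∧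
      {i | walk i ∈ FstarSet E F}.Infinite ∧ {i | walk i ∈ F}.Infinite := by
  obtain ⟨f, hf, hvf⟩ := hreach
  obtain ⟨u', hfu', hu'f⟩ := hcyc f hf
  obtain ⟨w, hw0, hw, hwf⟩ := hvf.exists_walk_infinite_eq (.head' hfu' hu'f)
  have hstar : {i | w i ∈ FstarSet E F}.Infinite :=
    hwf.mono fun i (hi : w i = f) => by simpa [hi] using hf
  exact ⟨w, hw0, hw, hstar, hstar.mono fun i hi => fstarSet_subset E F hi⟩

/-- If F* is nonempty, every vertex of F* lies on a directed cycle, and some vertex of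
F* is reachable from v, then there is an infinite walk from v visiting F* (hence F)
infinitely often. -/
theorem exists_accepting_walk {V : Type*} [Finite V]
    (E : V → V → Prop) (F : Set V)
    (hcyc : ∀ u ∈ FstarSet E F, ∃ u', E u u' ∧ Relation.ReflTransGen E u' u)
    (v : V) (hreach : ∃ f ∈ FstarSet E F, Relation.ReflTransGen E v f) :
    ∃ walk : ℕ → V, walk 0 = v ∧ (∀ i, E (walk i) (walk (i + 1))) ∧
      {i | walk i ∈ FstarSet E F}.Infinite ∧ {i | walk i ∈ F}.Infinite :=
  exists_accepting_walk_general E F hcyc v hreach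
end

section
/- Recursive feasibility of the RHC scheme: in a finite directed graph with strictly positive weights and energy J (distance to nonempty self-reachable F*), suppose at step k−1 the chosen horizon-N path s₁…s_N from the current vertex satisfies J(s_i) > 0 for all i and J(s_N) < ∞. Then there exists a horizon-N path t₁…t_N starting from s₁ (i.e., each consecutive pair an edge, (s₁,t₁) an edge) with J(t_N) < J(s_N); namely t_i = s_{i+1} for i < N and t_N any successor of s_N with strictly smaller energy. -/
/-!
The new path is the old one shifted by one step, with a successor of `s_N` of smaller energy
appended. Such a successor exists because on a finite graph the edge weights have a positive
lower bound `δ`: a path from `s_N` into `F*` of cost below `J(s_N) + δ` leaves `s_N` along an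
edge of weight at least `δ`, so its second vertex has energy at most `cost - δ < J(s_N)`.
-/

open scoped ENNReal
open Classical

/-- Total weight of a walk given as a list of vertices. -/
noncomputable def walkCost {V : Type*} (w : V → V → ℝ≥0∞) : List V → ℝ≥0∞
  | [] => 0
  | [_] => 0
  | a :: b :: t => w a b + walkCost w (b :: t)

/-- Energy: J(v) = 0 if v ∈ F*, else the minimum total weight over directed paths
from v into F* (∞ if no such path exists). -/
noncomputable def energy {V : Type*} (E : V → V → Prop) (w : V → V → ℝ≥0∞)
    (Fstar : Set V) (v : V) : ℝ≥0∞ :=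
  if v ∈ Fstar then 0
  else sInf {c | ∃ p : List V, p ≠ [] ∧ List.Chain' E (v :: p) ∧
        (v :: p).getLast (by simp) ∈ Fstar ∧ c = walkCost w (v :: p)}

def shiftAppend {α : Type*} (s : ℕ → α) (N : ℕ) (v : α) : ℕ → α :=
  fun i => if i < N then s (i + 1) else v

section shiftAppend

variable {α : Type*} {s : ℕ → α} {N : ℕ} {v : α}

lemma shiftAppend_of_lt {i : ℕ} (hi : i < N) : shiftAppend s N v i = s (i + 1) :=
  if_pos hi

lemma shiftAppend_self : shiftAppend s N v N = v :=
  if_neg (lt_irrefl N)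

lemma rel_shiftAppend {R : α → α → Prop} (hs : ∀ i, 1 ≤ i → i < N → R (s i) (s (i + 1)))
    (hv : R (s N) v) : ∀ i, 1 ≤ i → i ≤ N → R (s i) (shiftAppend s N v i) := by
  intro i hi1 hiN
  rcases hiN.lt_or_eq with hlt | rfl
  · rw [shiftAppend_of_lt hlt]
    exact hs i hi1 hlt
  · rwa [shiftAppend_self]

end shiftAppend

lemma exists_pos_ne_top_le_of_finite {ι : Type*} [Finite ι] (r : ι → Prop) (f : ι → ℝ≥0∞)
    (hf : ∀ i, r i → 0 < f i) : ∃ δ, 0 < δ ∧ δ ≠ ∞ ∧ ∀ i, r i → δ ≤ f i := by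
  -- the extra value `1` at `none` keeps the minimum finite even when `r` is empty
  let g : Option ι → ℝ≥0∞ := fun o => o.elim 1 fun i => if r i then f i else 1
  obtain ⟨o, ho⟩ := Finite.exists_min g
  refine ⟨g o, ?_, ne_top_of_le_ne_top ENNReal.one_ne_top (ho none),
    fun i hi => by simpa [g, hi] using ho (some i)⟩
  rcases o with _ | i
  · simp [g]
  · by_cases hi : r i <;> simp [g, hi, hf i]

section energy

variable {V : Type*} {E : V → V → Prop} {w : V → V → ℝ≥0∞} {Fstar : Set V}

lemma energy_le_walkCost {v : V} {p : List V} (hch : List.IsChain E (v :: p))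
    (hlast : (v :: p).getLast (List.cons_ne_nil v p) ∈ Fstar) :
    energy E w Fstar v ≤ walkCost w (v :: p) := by
  unfold energy
  split_ifs with hv
  · exact zero_le
  · rcases p with _ | ⟨b, q⟩
    · exact absurd hlast hv
    · exact sInf_le ⟨b :: q, List.cons_ne_nil b q, hch, hlast, rfl⟩

lemma notMem_of_energy_pos {v : V} (h : 0 < energy E w Fstar v) : v ∉ Fstar := by
  intro hv
  simp [energy, hv] at h

lemma exists_rel_energy_lt [Finite V] (hw : ∀ a b, E a b → 0 < w a b) {v : V}
    (hpos : 0 < energy E w Fstar v) (hfin : energy E w Fstar v < ∞) :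
    ∃ v', E v v' ∧ energy E w Fstar v' < energy E w Fstar v := by
  obtain ⟨δ, hδ, hδtop, hδw⟩ :=
    exists_pos_ne_top_le_of_finite (fun e : V × V => E e.1 e.2) (fun e => w e.1 e.2)
      fun e he => hw e.1 e.2 he
  have hnear : energy E w Fstar v < energy E w Fstar v + δ :=
    ENNReal.lt_add_right hfin.ne hδ.ne'
  rw [energy, if_neg (notMem_of_energy_pos hpos)] at hnear
  obtain ⟨c, ⟨p, hp, hch, hlast, rfl⟩, hc⟩ := sInf_lt_iff.mp hnear
  obtain ⟨v', q, rfl⟩ := List.exists_cons_of_ne_nil hp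
  have hvv' : E v v' := hch.rel
  refine ⟨v', hvv', (ENNReal.add_lt_add_iff_right hδtop).mp ?_⟩
  calc energy E w Fstar v' + δ
      ≤ walkCost w (v' :: q) + w v v' := by
        gcongr
        · exact energy_le_walkCost hch.tail (by simpa using hlast)
        · exact hδw (v, v') hvv'
    _ = walkCost w (v :: v' :: q) := add_comm _ _
    _ < _ := by rwa [energy, if_neg (notMem_of_energy_pos hpos)]

end energy

theorem rhc_recursive_feasibility_general {V : Type*} [Finite V]
    (E : V → V → Prop) (w : V → V → ℝ≥0∞)
    (hw : ∀ a b, E a b → 0 < w a b)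
    (Fstar : Set V)
    (N : ℕ) (hN : 1 ≤ N) (s : ℕ → V)
    (hpath : ∀ i, 1 ≤ i → i < N → E (s i) (s (i + 1)))
    (hpos : ∀ i, 1 ≤ i → i ≤ N → 0 < energy E w Fstar (s i))
    (hfin : energy E w Fstar (s N) < ⊤) :
    ∃ t : ℕ → V,
      (∀ i, 1 ≤ i → i < N → t i = s (i + 1)) ∧
      E (s 1) (t 1) ∧
      (∀ i, 1 ≤ i → i < N → E (t i) (t (i + 1))) ∧
      E (s N) (t N) ∧
      energy E w Fstar (t N) < energy E w Fstar (s N) := by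
  obtain ⟨v', hv', hlt⟩ := exists_rel_energy_lt hw (hpos N hN le_rfl) hfin
  have hshift := rel_shiftAppend hpath hv'
  refine ⟨shiftAppend s N v', fun i _ hi => shiftAppend_of_lt hi, hshift 1 le_rfl hN,
    fun i hi1 hi => ?_, hshift N hN le_rfl, by rwa [shiftAppend_self]⟩
  rw [shiftAppend_of_lt hi]
  exact hshift (i + 1) (by omega) hi

/-- Recursive feasibility of the RHC scheme: if the previously chosen horizon-N path
s₁…s_N satisfies J(s_i) > 0 for all i and J(s_N) < ∞, then there is a horizon-N path
t₁…t_N starting from s₁ (shifting s and appending a Bellman successor of s_N) with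
J(t_N) < J(s_N). -/
theorem rhc_recursive_feasibility {V : Type*} [Finite V]
    (E : V → V → Prop) (w : V → V → ℝ≥0∞)
    (hw : ∀ a b, E a b → 0 < w a b) (hwfin : ∀ a b, E a b → w a b < ⊤)
    (Fstar : Set V) (hF : Fstar.Nonempty)
    (N : ℕ) (hN : 1 ≤ N) (s : ℕ → V)
    (hpath : ∀ i, 1 ≤ i → i < N → E (s i) (s (i + 1)))
    (hpos : ∀ i, 1 ≤ i → i ≤ N → 0 < energy E w Fstar (s i))
    (hfin : energy E w Fstar (s N) < ⊤) :
    ∃ t : ℕ → V,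
      (∀ i, 1 ≤ i → i < N → t i = s (i + 1)) ∧
      E (s 1) (t 1) ∧
      (∀ i, 1 ≤ i → i < N → E (t i) (t (i + 1))) ∧
      E (s N) (t N) ∧
      energy E w Fstar (t N) < energy E w Fstar (s N) :=
  rhc_recursive_feasibility_general E w hw Fstar N hN s hpath hpos hfin
end
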